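/- arXiv:2602.24178 — 3 statements merged into one kernel-verified Lean document; each statement's English description precedes it below -/
import Mathlib

section
/- Let D be a probability distribution on ℝ^d and let f : ℝ^d → {−1, 1} be a concept with σ-smooth boundary with respect to D, where σ ≥ 1. Then for every ε ∈ (0,1) and every real s ≥ 1 there exist functions f_up, f_down : ℝ^d → [−1, 1] that are L-Lipschitz with L = 2σ(2/ε)^s and satisfy: (i) f_down(x) ≤ f(x) ≤ f_up(x) for every x ∈ ℝ^d, and (ii) ‖f_up − f_down‖_{D,s} ≤ ε. -/
open MeasureTheory Matrix

/-- A concept takes values in `{-1, 1}`. -/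
def IsConcept {d : ℕ} (f : EuclideanSpace ℝ (Fin d) → ℝ) : Prop :=
  ∀ x, f x = 1 ∨ f x = -1

/-- The `ρ`-dilation `f^{+ρ}(x) = sup_{‖z‖ ≤ ρ} f (x + z)`. -/
noncomputable def dilation {d : ℕ} (f : EuclideanSpace ℝ (Fin d) → ℝ) (ρ : ℝ)
    (x : EuclideanSpace ℝ (Fin d)) : ℝ :=
  sSup (f '' Metric.closedBall x ρ)

/-- The `ρ`-erosion `f^{-ρ}(x) = inf_{‖z‖ ≤ ρ} f (x + z)`. -/
noncomputable def erosion {d : ℕ} (f : EuclideanSpace ℝ (Fin d) → ℝ) (ρ : ℝ)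
    (x : EuclideanSpace ℝ (Fin d)) : ℝ :=
  sInf (f '' Metric.closedBall x ρ)

/-- `f` has `σ`-smooth boundary with respect to `D`:
`E_{x∼D}[(f^{+ρ}(x) − f^{−ρ}(x))/2] ≤ σρ` for all `ρ ≥ 0`. -/
def HasSmoothBoundary {d : ℕ} (f : EuclideanSpace ℝ (Fin d) → ℝ)
    (D : Measure (EuclideanSpace ℝ (Fin d))) (σ : ℝ) : Prop :=
  ∀ ρ : ℝ, 0 ≤ ρ →
    ∫⁻ x, ENNReal.ofReal ((dilation f ρ x - erosion f ρ x) / 2) ∂D ≤ ENNReal.ofReal (σ * ρ)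

/-- `D` is `γ`-strictly subexponential with parameters `α, β`. -/
def StrictlySubexponential {d : ℕ} (D : Measure (EuclideanSpace ℝ (Fin d)))
    (γ α β : ℝ) : Prop :=
  ∀ w : EuclideanSpace ℝ (Fin d), ‖w‖ = 1 → ∀ r : ℝ, 0 ≤ r →
    D {x | r ≤ |(inner ℝ w x : ℝ)|} ≤ ENNReal.ofReal (α * Real.exp (-β * r ^ (1 + γ)))

/-- `D` is `α`-anticoncentrated in every direction. -/
def Anticoncentrated {d : ℕ} (D : Measure (EuclideanSpace ℝ (Fin d))) (α : ℝ) : Prop :=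
  ∀ w : EuclideanSpace ℝ (Fin d), ‖w‖ = 1 → ∀ t r : ℝ, 0 ≤ r →
    D {x | |(inner ℝ w x : ℝ) - t| ≤ r} ≤ ENNReal.ofReal (α * r)

/-- The map `x ↦ W x` from `ℝ^d` to `ℝ^k`. -/
noncomputable def projMap {d k : ℕ} (W : Matrix (Fin k) (Fin d) ℝ)
    (x : EuclideanSpace ℝ (Fin d)) : EuclideanSpace ℝ (Fin k) :=
  (WithLp.equiv 2 (Fin k → ℝ)).symm (W.mulVec (WithLp.equiv 2 (Fin d → ℝ) x))

/-- `f` has intrinsic dimension `k`: `f(x) = F(Wx)` with `W Wᵀ = I`. -/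
def HasIntrinsicDim {d : ℕ} (f : EuclideanSpace ℝ (Fin d) → ℝ) (k : ℕ) : Prop :=
  ∃ (F : EuclideanSpace ℝ (Fin k) → ℝ) (W : Matrix (Fin k) (Fin d) ℝ),
    W * Wᵀ = 1 ∧ ∀ x, f x = F (projMap W x)

/-- Evaluation of a multivariate polynomial at a point of `ℝ^d`. -/
noncomputable def evalPoly {d : ℕ} (p : MvPolynomial (Fin d) ℝ)
    (x : EuclideanSpace ℝ (Fin d)) : ℝ :=
  MvPolynomial.eval (fun i => x i) p

/-- Sum of absolute values of the coefficients of `p`. -/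
noncomputable def coefNorm {d : ℕ} (p : MvPolynomial (Fin d) ℝ) : ℝ :=
  ∑ m ∈ p.support, |MvPolynomial.coeff m p|

/-- `pup, pdown` are `(ε, s)`-sandwiching polynomials of degree at most `ℓ` for `f` w.r.t. `D`. -/
def IsSandwiching {d : ℕ} (f : EuclideanSpace ℝ (Fin d) → ℝ)
    (D : Measure (EuclideanSpace ℝ (Fin d))) (ε s ℓ : ℝ)
    (pup pdown : MvPolynomial (Fin d) ℝ) : Prop :=
  (pup.totalDegree : ℝ) ≤ ℓ ∧ (pdown.totalDegree : ℝ) ≤ ℓ ∧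
  (∀ x, evalPoly pdown x ≤ f x ∧ f x ≤ evalPoly pup x) ∧
  eLpNorm (fun x => evalPoly pup x - evalPoly pdown x) (ENNReal.ofReal s) D ≤ ENNReal.ofReal ε

/-- The standard Gaussian measure on `ℝ^d`. -/
noncomputable def stdGaussian (d : ℕ) : Measure (EuclideanSpace ℝ (Fin d)) :=
  volume.withDensity fun x =>
    ENNReal.ofReal ((2 * Real.pi) ^ (-(d : ℝ) / 2) * Real.exp (-‖x‖ ^ 2 / 2))

/-- The halfspace concept `sign(w·x − t)`. -/
noncomputable def halfspaceSign {d : ℕ} (w : EuclideanSpace ℝ (Fin d)) (t : ℝ)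
    (x : EuclideanSpace ℝ (Fin d)) : ℝ :=
  if 0 ≤ (inner ℝ w x : ℝ) - t then 1 else -1

/-- The intersection of `k` halfspaces `2·Π_i 1{w_i·x ≤ τ_i} − 1`. -/
noncomputable def halfspaceIntersection {d k : ℕ} (w : Fin k → EuclideanSpace ℝ (Fin d))
    (τ : Fin k → ℝ) (x : EuclideanSpace ℝ (Fin d)) : ℝ :=
  2 * ∏ i, (if (inner ℝ (w i) x : ℝ) ≤ τ i then (1 : ℝ) else 0) - 1

/-- The low-dimensional convex-set concept `2·1_K(Wx) − 1`. -/
noncomputable def convexConcept {d k : ℕ} (K : Set (EuclideanSpace ℝ (Fin k)))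
    (W : Matrix (Fin k) (Fin d) ℝ) (x : EuclideanSpace ℝ (Fin d)) : ℝ :=
  2 * Set.indicator K (fun _ => (1 : ℝ)) (projMap W x) - 1

/-- The low-dimensional polynomial threshold function `sign(P(Wx))`. -/
noncomputable def ptfConcept {d k : ℕ} (P : MvPolynomial (Fin k) ℝ)
    (W : Matrix (Fin k) (Fin d) ℝ) (x : EuclideanSpace ℝ (Fin d)) : ℝ :=
  if 0 ≤ evalPoly P (projMap W x) then 1 else -1

/-- `D' ∈ MM_D(ℓ, Δ)`: all moments of multidegree at most `ℓ` exist and match up to `Δ`. -/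
def MomentMatching {d : ℕ} (D D' : Measure (EuclideanSpace ℝ (Fin d))) (ℓ : ℕ) (Δ : ℝ) : Prop :=
  ∀ I : Fin d → ℕ, (∑ i, I i) ≤ ℓ →
    Integrable (fun x => ∏ i, (x i) ^ I i) D ∧
    Integrable (fun x => ∏ i, (x i) ^ I i) D' ∧
    |(∫ x, ∏ i, (x i) ^ I i ∂D) - ∫ x, ∏ i, (x i) ^ I i ∂D'| ≤ Δ

/-!
With `L = 2σ(2/ε)^s`, the envelopes are `f_up = 1 - min (L · dist(·, {f = 1})) 2` and
`f_down = min (L · dist(·, {f = -1})) 2 - 1`: they are `L`-Lipschitz, sandwich `f`, and their gap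
`f_up - f_down ∈ [0, 2]` vanishes at `x` unless the ball of radius `ρ = 2 / L` around `x` meets
both level sets, i.e. unless `f^{+ρ}(x) - f^{-ρ}(x) = 2`. Hence `(f_up - f_down)^s ≤
2^s (f^{+ρ} - f^{-ρ}) / 2`, and the smooth-boundary bound gives
`‖f_up - f_down‖_s^s ≤ 2^s σ ρ = ε^s`.
-/

open Metric Set
open scoped NNReal

section DistCutoff

variable {E : Type*} [PseudoMetricSpace E]

noncomputable def distCutoff (L : ℝ≥0) (S : Set E) (x : E) : ℝ :=
  min (L * infDist x S) 2

lemma lipschitzWith_distCutoff (L : ℝ≥0) (S : Set E) : LipschitzWith L (distCutoff L S) := by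
  show LipschitzWith L fun x ↦ min (L * infDist x S) 2
  simpa using ((lipschitzWith_smul (L : ℝ)).comp (lipschitz_infDist_pt S)).min_const 2

lemma distCutoff_nonneg (L : ℝ≥0) (S : Set E) (x : E) : 0 ≤ distCutoff L S x :=
  le_min (mul_nonneg L.2 infDist_nonneg) zero_le_two

lemma distCutoff_le_two (L : ℝ≥0) (S : Set E) (x : E) : distCutoff L S x ≤ 2 :=
  min_le_right _ _

lemma one_sub_distCutoff_mem_Icc (L : ℝ≥0) (S : Set E) (x : E) :
    1 - distCutoff L S x ∈ Icc (-1 : ℝ) 1 :=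
  ⟨by linarith [distCutoff_le_two L S x], by linarith [distCutoff_nonneg L S x]⟩

lemma distCutoff_sub_one_mem_Icc (L : ℝ≥0) (S : Set E) (x : E) :
    distCutoff L S x - 1 ∈ Icc (-1 : ℝ) 1 :=
  ⟨by linarith [distCutoff_nonneg L S x], by linarith [distCutoff_le_two L S x]⟩

lemma distCutoff_of_mem {L : ℝ≥0} {S : Set E} {x : E} (hx : x ∈ S) : distCutoff L S x = 0 := by
  simp [distCutoff, infDist_zero_of_mem hx]

lemma distCutoff_eq_two {L : ℝ≥0} {S : Set E} {x : E} {ρ : ℝ} (hS : S.Nonempty)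
    (hLρ : 2 ≤ L * ρ) (hx : ∀ y ∈ closedBall x ρ, y ∉ S) : distCutoff L S x = 2 := by
  have hρ : ρ ≤ infDist x S := not_lt.1 fun h ↦ by
    obtain ⟨y, hyS, hy⟩ := (infDist_lt_iff hS).1 h
    exact hx y (mem_closedBall'.2 hy.le) hyS
  exact min_eq_right (hLρ.trans (by gcongr))

end DistCutoff

lemma rpow_le_two_rpow_mul_half {s t u : ℝ} (hs : 1 ≤ s) (ht : t ∈ Icc (0 : ℝ) 2)
    (htu : t ≤ u) : t ^ s ≤ 2 ^ s * (u / 2) := by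
  have ht2 : t / 2 ≤ 1 := by linarith [ht.2]
  calc t ^ s = 2 ^ s * (t / 2) ^ s := by
        rw [Real.div_rpow ht.1 zero_le_two]; field_simp
    _ ≤ 2 ^ s * (t / 2) ^ (1 : ℝ) := by
        have := Real.rpow_le_rpow_of_exponent_ge' (by linarith [ht.1]) ht2 zero_le_one hs
        gcongr
    _ ≤ 2 ^ s * (u / 2) := by rw [Real.rpow_one]; gcongr

lemma eLpNorm_le_two_mul_rpow {α : Type*} [MeasurableSpace α] {μ : Measure α} {g h : α → ℝ}
    {s A : ℝ} (hs : 1 ≤ s) (hA : 0 ≤ A) (hg : ∀ x, g x ∈ Icc (0 : ℝ) 2)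
    (hgh : ∀ x, g x ≤ h x) (hint : ∫⁻ x, ENNReal.ofReal (h x / 2) ∂μ ≤ ENNReal.ofReal A) :
    eLpNorm g (ENNReal.ofReal s) μ ≤ ENNReal.ofReal (2 * A ^ s⁻¹) := by
  have hs0 : 0 < s := by linarith
  have hpt (x : α) : ‖g x‖ₑ ^ s ≤ ENNReal.ofReal (2 ^ s) * ENNReal.ofReal (h x / 2) := by
    rw [Real.enorm_eq_ofReal (hg x).1, ENNReal.ofReal_rpow_of_nonneg (hg x).1 hs0.le,
      ← ENNReal.ofReal_mul (by positivity)]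
    exact ENNReal.ofReal_le_ofReal (rpow_le_two_rpow_mul_half hs (hg x) (hgh x))
  have hmoment : ∫⁻ x, ‖g x‖ₑ ^ s ∂μ ≤ ENNReal.ofReal (2 ^ s) * ENNReal.ofReal A :=
    calc ∫⁻ x, ‖g x‖ₑ ^ s ∂μ
        ≤ ∫⁻ x, ENNReal.ofReal (2 ^ s) * ENNReal.ofReal (h x / 2) ∂μ := lintegral_mono hpt
      _ ≤ ENNReal.ofReal (2 ^ s) * ENNReal.ofReal A := by
        rw [lintegral_const_mul' _ _ ENNReal.ofReal_ne_top]; gcongr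
  rw [eLpNorm_eq_lintegral_rpow_enorm_toReal (by simpa using hs0) ENNReal.ofReal_ne_top,
    ENNReal.toReal_ofReal hs0.le]
  calc (∫⁻ x, ‖g x‖ₑ ^ s ∂μ) ^ (1 / s)
      ≤ (ENNReal.ofReal (2 ^ s) * ENNReal.ofReal A) ^ (1 / s) := by gcongr
    _ = ENNReal.ofReal (2 * A ^ s⁻¹) := by
      rw [← ENNReal.ofReal_mul (by positivity),
        ENNReal.ofReal_rpow_of_nonneg (by positivity) (by positivity),
        Real.mul_rpow (by positivity) hA, ← Real.rpow_mul zero_le_two,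
        mul_one_div_cancel hs0.ne', Real.rpow_one, one_div]

namespace IsConcept

variable {d : ℕ} {f : EuclideanSpace ℝ (Fin d) → ℝ}

lemma mem_Icc (hf : IsConcept f) (x : EuclideanSpace ℝ (Fin d)) : f x ∈ Icc (-1 : ℝ) 1 := by
  rcases hf x with h | h <;> norm_num [h]

lemma lipschitzWith_zero (hf : IsConcept f)
    (h : ¬ ({y | f y = 1}.Nonempty ∧ {y | f y = -1}.Nonempty)) : LipschitzWith 0 f := by
  refine LipschitzWith.of_dist_le_mul fun a b ↦ ?_
  suffices f a = f b by simp [this]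
  rcases hf a with ha | ha <;> rcases hf b with hb | hb
  · rw [ha, hb]
  · exact absurd ⟨⟨a, ha⟩, b, hb⟩ h
  · exact absurd ⟨⟨b, hb⟩, a, ha⟩ h
  · rw [ha, hb]

lemma erosion_le_dilation (hf : IsConcept f) {ρ : ℝ} (hρ : 0 ≤ ρ) (x : EuclideanSpace ℝ (Fin d)) :
    erosion f ρ x ≤ dilation f ρ x :=
  csInf_le_csSup ((nonempty_closedBall.2 hρ).image f)
    ⟨-1, by rintro _ ⟨y, -, rfl⟩; exact (hf.mem_Icc y).1⟩
    ⟨1, by rintro _ ⟨y, -, rfl⟩; exact (hf.mem_Icc y).2⟩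

lemma dilation_eq_one (hf : IsConcept f) {ρ : ℝ} {x : EuclideanSpace ℝ (Fin d)}
    (h : ∃ y ∈ closedBall x ρ, f y = 1) : dilation f ρ x = 1 :=
  IsGreatest.csSup_eq ⟨h, by rintro _ ⟨y, -, rfl⟩; exact (hf.mem_Icc y).2⟩

lemma erosion_eq_neg_one (hf : IsConcept f) {ρ : ℝ} {x : EuclideanSpace ℝ (Fin d)}
    (h : ∃ y ∈ closedBall x ρ, f y = -1) : erosion f ρ x = -1 :=
  IsLeast.csInf_eq ⟨h, by rintro _ ⟨y, -, rfl⟩; exact (hf.mem_Icc y).1⟩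

lemma distCutoff_sub_one_le_and_le_one_sub_distCutoff (hf : IsConcept f) (L : ℝ≥0)
    (x : EuclideanSpace ℝ (Fin d)) :
    distCutoff L {y | f y = -1} x - 1 ≤ f x ∧ f x ≤ 1 - distCutoff L {y | f y = 1} x := by
  rcases hf x with h | h
  · rw [h, distCutoff_of_mem (show x ∈ {y | f y = 1} from h)]
    constructor <;> linarith [distCutoff_le_two L {y | f y = -1} x]
  · rw [h, distCutoff_of_mem (show x ∈ {y | f y = -1} from h)]
    constructor <;> linarith [distCutoff_le_two L {y | f y = 1} x]

lemma two_sub_distCutoff_sub_distCutoff_le (hf : IsConcept f) (hpos : {y | f y = 1}.Nonempty)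
    (hneg : {y | f y = -1}.Nonempty) {L : ℝ≥0} {ρ : ℝ} (hρ : 0 ≤ ρ) (hLρ : 2 ≤ L * ρ)
    (x : EuclideanSpace ℝ (Fin d)) :
    2 - distCutoff L {y | f y = 1} x - distCutoff L {y | f y = -1} x ≤
      dilation f ρ x - erosion f ρ x := by
  have hgap := hf.erosion_le_dilation hρ x
  have hcpos := distCutoff_nonneg L {y | f y = 1} x
  have hcneg := distCutoff_nonneg L {y | f y = -1} x
  by_cases hmeetpos : ∃ y ∈ closedBall x ρ, f y = 1
  · by_cases hmeetneg : ∃ y ∈ closedBall x ρ, f y = -1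
    · rw [hf.dilation_eq_one hmeetpos, hf.erosion_eq_neg_one hmeetneg]
      linarith
    · push Not at hmeetneg
      rw [distCutoff_eq_two hneg hLρ hmeetneg]
      linarith
  · push Not at hmeetpos
    rw [distCutoff_eq_two hpos hLρ hmeetpos]
    linarith

lemma eLpNorm_envelope_sub_le {D : Measure (EuclideanSpace ℝ (Fin d))} {σ ε s : ℝ}
    (hf : IsConcept f) (hsb : HasSmoothBoundary f D σ) (hpos : {y | f y = 1}.Nonempty)
    (hneg : {y | f y = -1}.Nonempty) (hε : 0 ≤ ε) (hs : 1 ≤ s) {L : ℝ≥0} {ρ : ℝ} (hρ : 0 ≤ ρ)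
    (hLρ : 2 ≤ L * ρ) (hσρ : σ * ρ = (ε / 2) ^ s) :
    eLpNorm (fun x ↦ (1 - distCutoff L {y | f y = 1} x) - (distCutoff L {y | f y = -1} x - 1))
      (ENNReal.ofReal s) D ≤ ENNReal.ofReal ε := by
  have hsand := hf.distCutoff_sub_one_le_and_le_one_sub_distCutoff L
  have hcpos := distCutoff_nonneg L {y | f y = 1}
  have hcneg := distCutoff_nonneg L {y | f y = -1}
  have hgap := hf.two_sub_distCutoff_sub_distCutoff_le hpos hneg hρ hLρ
  calc _ ≤ ENNReal.ofReal (2 * (σ * ρ) ^ s⁻¹) :=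
        eLpNorm_le_two_mul_rpow hs (by rw [hσρ]; positivity)
          (fun x ↦ ⟨by linarith [hsand x], by linarith [hcpos x, hcneg x]⟩)
          (fun x ↦ by linarith [hgap x]) (hsb ρ hρ)
    _ = ENNReal.ofReal ε := by
      rw [hσρ, ← Real.rpow_mul (by positivity), mul_inv_cancel₀ (by positivity), Real.rpow_one]
      congr 1; ring

end IsConcept

theorem statement_1_general {d : ℕ} (D : Measure (EuclideanSpace ℝ (Fin d)))
    (σ : ℝ) (hσ : 1 ≤ σ) (f : EuclideanSpace ℝ (Fin d) → ℝ)
    (hf : IsConcept f) (hsb : HasSmoothBoundary f D σ)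
    (ε s : ℝ) (hε0 : 0 < ε) (hs : 1 ≤ s) :
    ∃ fup fdown : EuclideanSpace ℝ (Fin d) → ℝ,
      LipschitzWith (2 * σ * (2 / ε) ^ s).toNNReal fup ∧
      LipschitzWith (2 * σ * (2 / ε) ^ s).toNNReal fdown ∧
      (∀ x, fup x ∈ Set.Icc (-1 : ℝ) 1) ∧ (∀ x, fdown x ∈ Set.Icc (-1 : ℝ) 1) ∧
      (∀ x, fdown x ≤ f x ∧ f x ≤ fup x) ∧
      eLpNorm (fun x => fup x - fdown x) (ENNReal.ofReal s) D ≤ ENNReal.ofReal ε := by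
  by_cases hboth : {y | f y = 1}.Nonempty ∧ {y | f y = -1}.Nonempty
  swap
  · -- `infDist x ∅ = 0`, so the cutoffs are useless when a level set is empty; then `f` is constant.
    have hf0 := hf.lipschitzWith_zero hboth
    exact ⟨f, f, hf0.weaken bot_le, hf0.weaken bot_le, hf.mem_Icc, hf.mem_Icc,
      fun _ ↦ ⟨le_rfl, le_rfl⟩, by simp⟩
  have hσ0 : 0 < σ := by linarith
  set L := (2 * σ * (2 / ε) ^ s).toNNReal
  set ρ := (ε / 2) ^ s / σ
  have hσρ : σ * ρ = (ε / 2) ^ s := mul_div_cancel₀ _ hσ0.ne'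
  have hLρ : (L : ℝ) * ρ = 2 := by
    have hinv : (2 / ε) ^ s * (ε / 2) ^ s = 1 := by
      rw [← Real.mul_rpow (by positivity) (by positivity), div_mul_div_cancel₀ hε0.ne',
        div_self two_ne_zero, Real.one_rpow]
    calc (L : ℝ) * ρ = 2 * (2 / ε) ^ s * (σ * ρ) := by
          rw [Real.coe_toNNReal _ (by positivity)]; ring
      _ = 2 := by rw [hσρ, mul_assoc, hinv, mul_one]
  exact ⟨fun x ↦ 1 - distCutoff L {y | f y = 1} x, fun x ↦ distCutoff L {y | f y = -1} x - 1,
    by simpa using (LipschitzWith.const 1).sub (lipschitzWith_distCutoff L _),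
    by simpa using (lipschitzWith_distCutoff L _).sub (LipschitzWith.const 1),
    one_sub_distCutoff_mem_Icc L _, distCutoff_sub_one_mem_Icc L _,
    hf.distCutoff_sub_one_le_and_le_one_sub_distCutoff L,
    hf.eLpNorm_envelope_sub_le hsb hboth.1 hboth.2 hε0.le hs (by positivity) hLρ.ge hσρ⟩

theorem statement_1 {d : ℕ} (D : Measure (EuclideanSpace ℝ (Fin d))) [IsProbabilityMeasure D]
    (σ : ℝ) (hσ : 1 ≤ σ) (f : EuclideanSpace ℝ (Fin d) → ℝ)
    (hf : IsConcept f) (hsb : HasSmoothBoundary f D σ)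
    (ε s : ℝ) (hε0 : 0 < ε) (hε1 : ε < 1) (hs : 1 ≤ s) :
    ∃ fup fdown : EuclideanSpace ℝ (Fin d) → ℝ,
      LipschitzWith (2 * σ * (2 / ε) ^ s).toNNReal fup ∧
      LipschitzWith (2 * σ * (2 / ε) ^ s).toNNReal fdown ∧
      (∀ x, fup x ∈ Set.Icc (-1 : ℝ) 1) ∧ (∀ x, fdown x ∈ Set.Icc (-1 : ℝ) 1) ∧
      (∀ x, fdown x ≤ f x ∧ f x ≤ fup x) ∧
      eLpNorm (fun x => fup x - fdown x) (ENNReal.ofReal s) D ≤ ENNReal.ofReal ε :=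
  statement_1_general D σ hσ f hf hsb ε s hε0 hs
end

section
/- Let f : ℝ^d → {−1, 1} be a concept with f(x) = F(Wx) for all x, where F : ℝ^k → {−1, 1} and W ∈ ℝ^{k×d} satisfies WWᵀ = I_{k×k}. Then for every ρ ≥ 0 and every x ∈ ℝ^d one has f^{+ρ}(x) = F^{+ρ}(Wx) and f^{−ρ}(x) = F^{−ρ}(Wx). Consequently, if f has σ-smooth boundary with respect to a probability distribution D on ℝ^d, then F has σ-smooth boundary with respect to the pushforward of D under the map x ↦ Wx. -/
/-!
Since `W Wᵀ = I`, the map `Wᵀ` is an isometry and `W` is `1`-Lipschitz, so `W` maps every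
closed ball `B(x, ρ)` onto `B(Wx, ρ)`: a point `y` of `B(Wx, ρ)` is the image of
`x + Wᵀ(y - Wx)`. Hence the supremum and infimum of `F ∘ W` over `B(x, ρ)` are those of `F`
over `B(Wx, ρ)`, and the smoothness integral of `F` against the pushforward of `D` is the one
of `f` against `D`.
-/

open MeasureTheory Matrix

open Metric

namespace LinearMap

variable {𝕜 E F : Type*} [RCLike 𝕜]
  [NormedAddCommGroup E] [InnerProductSpace 𝕜 E] [FiniteDimensional 𝕜 E]
  [NormedAddCommGroup F] [InnerProductSpace 𝕜 F] [FiniteDimensional 𝕜 F]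
  {A : E →ₗ[𝕜] F}

theorem norm_adjoint_apply_of_comp_adjoint_eq_id (hA : A ∘ₗ A.adjoint = id) (y : F) :
    ‖A.adjoint y‖ = ‖y‖ :=
  (norm_map_iff_inner_map_map A.adjoint).mpr
    (fun u v => by rw [adjoint_inner_right, ← comp_apply, hA, id_apply]) y

theorem norm_apply_le_of_comp_adjoint_eq_id (hA : A ∘ₗ A.adjoint = id) (x : E) :
    ‖A x‖ ≤ ‖x‖ := by
  have h : ‖A x‖ * ‖A x‖ ≤ ‖A x‖ * ‖x‖ :=
    calc ‖A x‖ * ‖A x‖ = RCLike.re (inner 𝕜 (A.adjoint (A x)) x) := by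
          rw [adjoint_inner_left, ← norm_sq_eq_re_inner, sq]
      _ ≤ ‖A.adjoint (A x)‖ * ‖x‖ := re_inner_le_norm _ _
      _ = ‖A x‖ * ‖x‖ := by rw [norm_adjoint_apply_of_comp_adjoint_eq_id hA]
  rcases (norm_nonneg (A x)).eq_or_lt with h0 | hpos
  · rw [← h0]; exact norm_nonneg x
  · exact le_of_mul_le_mul_left h hpos

theorem image_closedBall_of_comp_adjoint_eq_id (hA : A ∘ₗ A.adjoint = id) (x : E) (r : ℝ) :
    A '' closedBall x r = closedBall (A x) r := by
  ext y
  simp only [Set.mem_image, mem_closedBall, dist_eq_norm]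
  constructor
  · rintro ⟨z, hz, rfl⟩
    rw [← map_sub]
    exact (norm_apply_le_of_comp_adjoint_eq_id hA _).trans hz
  · intro hy
    refine ⟨x + A.adjoint (y - A x), ?_, ?_⟩
    · rwa [add_sub_cancel_left, norm_adjoint_apply_of_comp_adjoint_eq_id hA]
    · rw [map_add, ← comp_apply, hA, id_apply, add_sub_cancel]

end LinearMap

theorem projMap_eq_toEuclideanLin {d k : ℕ} (W : Matrix (Fin k) (Fin d) ℝ) :
    projMap W = toEuclideanLin W :=
  rfl

theorem toEuclideanLin_comp_adjoint_eq_id {d k : ℕ} {W : Matrix (Fin k) (Fin d) ℝ}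
    (hW : W * Wᵀ = 1) :
    toEuclideanLin W ∘ₗ (toEuclideanLin W).adjoint = LinearMap.id := by
  rw [← Matrix.toEuclideanLin_conjTranspose_eq_adjoint, conjTranspose_eq_transpose_of_trivial]
  ext v i
  simp [Matrix.mulVec_mulVec, hW]

theorem image_projMap_closedBall {d k : ℕ} {W : Matrix (Fin k) (Fin d) ℝ} (hW : W * Wᵀ = 1)
    (x : EuclideanSpace ℝ (Fin d)) (ρ : ℝ) :
    projMap W '' closedBall x ρ = closedBall (projMap W x) ρ := by
  rw [projMap_eq_toEuclideanLin]
  exact LinearMap.image_closedBall_of_comp_adjoint_eq_id (toEuclideanLin_comp_adjoint_eq_id hW) x ρ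

section Composition

variable {d k : ℕ} {F : EuclideanSpace ℝ (Fin k) → ℝ}
  {g : EuclideanSpace ℝ (Fin d) → EuclideanSpace ℝ (Fin k)}

theorem dilation_comp_of_image_closedBall {ρ : ℝ} {x : EuclideanSpace ℝ (Fin d)}
    (hg : g '' closedBall x ρ = closedBall (g x) ρ) :
    dilation (F ∘ g) ρ x = dilation F ρ (g x) := by
  rw [dilation, dilation, Set.image_comp, hg]

theorem erosion_comp_of_image_closedBall {ρ : ℝ} {x : EuclideanSpace ℝ (Fin d)}
    (hg : g '' closedBall x ρ = closedBall (g x) ρ) :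
    erosion (F ∘ g) ρ x = erosion F ρ (g x) := by
  rw [erosion, erosion, Set.image_comp, hg]

theorem HasSmoothBoundary.map_of_image_closedBall {D : Measure (EuclideanSpace ℝ (Fin d))}
    {σ : ℝ} (hg : ∀ x ρ, g '' closedBall x ρ = closedBall (g x) ρ)
    (h : HasSmoothBoundary (F ∘ g) D σ) : HasSmoothBoundary F (D.map g) σ := by
  intro ρ hρ
  calc ∫⁻ y, ENNReal.ofReal ((dilation F ρ y - erosion F ρ y) / 2) ∂D.map g
      ≤ ∫⁻ x, ENNReal.ofReal ((dilation F ρ (g x) - erosion F ρ (g x)) / 2) ∂D :=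
        lintegral_map_le _ g
    _ = ∫⁻ x, ENNReal.ofReal ((dilation (F ∘ g) ρ x - erosion (F ∘ g) ρ x) / 2) ∂D := by
        simp only [dilation_comp_of_image_closedBall (hg _ ρ),
          erosion_comp_of_image_closedBall (hg _ ρ)]
    _ ≤ ENNReal.ofReal (σ * ρ) := h ρ hρ

end Composition

theorem statement_3_general {d k : ℕ} (f : EuclideanSpace ℝ (Fin d) → ℝ)
    (F : EuclideanSpace ℝ (Fin k) → ℝ)
    (W : Matrix (Fin k) (Fin d) ℝ) (hW : W * Wᵀ = 1)
    (hfF : ∀ x, f x = F (projMap W x)) :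
    (∀ ρ : ℝ, 0 ≤ ρ → ∀ x,
        dilation f ρ x = dilation F ρ (projMap W x) ∧
        erosion f ρ x = erosion F ρ (projMap W x)) ∧
    (∀ D : Measure (EuclideanSpace ℝ (Fin d)), IsProbabilityMeasure D → ∀ σ : ℝ,
        HasSmoothBoundary f D σ → HasSmoothBoundary F (D.map (projMap W)) σ) := by
  obtain rfl : f = F ∘ projMap W := funext hfF
  have hball := image_projMap_closedBall hW
  exact ⟨fun ρ _ x => ⟨dilation_comp_of_image_closedBall (hball x ρ),
      erosion_comp_of_image_closedBall (hball x ρ)⟩,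
    fun _ _ _ h => h.map_of_image_closedBall hball⟩

theorem statement_3 {d k : ℕ} (f : EuclideanSpace ℝ (Fin d) → ℝ)
    (F : EuclideanSpace ℝ (Fin k) → ℝ) (hF : IsConcept F)
    (W : Matrix (Fin k) (Fin d) ℝ) (hW : W * Wᵀ = 1)
    (hfF : ∀ x, f x = F (projMap W x)) :
    (∀ ρ : ℝ, 0 ≤ ρ → ∀ x,
        dilation f ρ x = dilation F ρ (projMap W x) ∧
        erosion f ρ x = erosion F ρ (projMap W x)) ∧
    (∀ D : Measure (EuclideanSpace ℝ (Fin d)), IsProbabilityMeasure D → ∀ σ : ℝ,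
        HasSmoothBoundary f D σ → HasSmoothBoundary F (D.map (projMap W)) σ) :=
  statement_3_general f F W hW hfF
end

section
/- Let D be a probability distribution on ℝ^d that is α-anticoncentrated in every direction, let w₁, …, w_k ∈ ℝ^d be unit vectors, t₁, …, t_k ∈ ℝ, and let G : {−1,1}^k → {−1, 1} be arbitrary. Then the concept f(x) = G(sign(w₁·x − t₁), …, sign(w_k·x − t_k)) has (k·α)-smooth boundary with respect to D. -/
open MeasureTheory Matrix

/-! Away from the union of the slabs `|w_i·x − t_i| ≤ ρ`, each sign `sign(w_i·y − t_i)` is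
constant on the ball `‖y − x‖ ≤ ρ`, so dilation and erosion agree there; on the slabs the
integrand is at most `1`, and anticoncentration bounds the measure of each slab by `αρ`. -/

section Concept

variable {d : ℕ} {f : EuclideanSpace ℝ (Fin d) → ℝ} {ρ : ℝ}

theorem IsConcept.dilation_sub_erosion_le_two (hf : IsConcept f) (hρ : 0 ≤ ρ)
    (x : EuclideanSpace ℝ (Fin d)) : dilation f ρ x - erosion f ρ x ≤ 2 := by
  have hne : (f '' Metric.closedBall x ρ).Nonempty :=
    (Metric.nonempty_closedBall.mpr hρ).image f
  have hle : dilation f ρ x ≤ 1 :=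
    csSup_le hne <| Set.forall_mem_image.mpr fun y _ => by rcases hf y with h | h <;> linarith
  have hge : -1 ≤ erosion f ρ x :=
    le_csInf hne <| Set.forall_mem_image.mpr fun y _ => by rcases hf y with h | h <;> linarith
  linarith

theorem dilation_sub_erosion_eq_zero_of_forall_eq (hρ : 0 ≤ ρ) {x : EuclideanSpace ℝ (Fin d)}
    (hx : ∀ y ∈ Metric.closedBall x ρ, f y = f x) : dilation f ρ x - erosion f ρ x = 0 := by
  have himg : f '' Metric.closedBall x ρ = {f x} :=
    Set.eq_singleton_iff_unique_mem.mpr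
      ⟨⟨x, Metric.mem_closedBall_self hρ, rfl⟩, Set.forall_mem_image.mpr hx⟩
  rw [dilation, erosion, himg, csSup_singleton, csInf_singleton, sub_self]

theorem IsConcept.lintegral_dilation_sub_erosion_le (hf : IsConcept f) (hρ : 0 ≤ ρ)
    (D : Measure (EuclideanSpace ℝ (Fin d))) {S : Set (EuclideanSpace ℝ (Fin d))}
    (hS : ∀ x ∉ S, ∀ y ∈ Metric.closedBall x ρ, f y = f x) :
    ∫⁻ x, ENNReal.ofReal ((dilation f ρ x - erosion f ρ x) / 2) ∂D ≤ D S := by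
  refine le_trans (lintegral_mono fun x => ?_) (lintegral_indicator_one_le S)
  by_cases hx : x ∈ S
  · rw [Set.indicator_of_mem hx, Pi.one_apply, ← ENNReal.ofReal_one]
    exact ENNReal.ofReal_le_ofReal (by linarith [hf.dilation_sub_erosion_le_two hρ x])
  · simp [dilation_sub_erosion_eq_zero_of_forall_eq hρ (hS x hx)]

end Concept

section Halfspace

variable {d : ℕ} {ι : Type*}

theorem halfspaceSign_eq_of_dist_le {w : EuclideanSpace ℝ (Fin d)} (hw : ‖w‖ ≤ 1) {t ρ : ℝ}
    {x y : EuclideanSpace ℝ (Fin d)} (hx : ρ < |inner ℝ w x - t|) (hy : dist y x ≤ ρ) :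
    halfspaceSign w t y = halfspaceSign w t x := by
  have hmove : |inner ℝ w y - inner ℝ w x| ≤ ρ :=
    calc |inner ℝ w y - inner ℝ w x| = |inner ℝ w (y - x)| := by rw [inner_sub_right]
      _ ≤ ‖w‖ * ‖y - x‖ := abs_real_inner_le_norm w (y - x)
      _ ≤ 1 * dist y x := by rw [dist_eq_norm]; gcongr
      _ ≤ ρ := by rwa [one_mul]
  obtain ⟨hlo, hhi⟩ := abs_le.mp hmove
  unfold halfspaceSign
  rcases lt_abs.mp hx with hpos | hneg <;> split_ifs <;> linarith

theorem isConcept_comp_halfspaceSign {G : (ι → ℝ) → ℝ}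
    (hG : ∀ v : ι → ℝ, (∀ i, v i = 1 ∨ v i = -1) → (G v = 1 ∨ G v = -1))
    (w : ι → EuclideanSpace ℝ (Fin d)) (t : ι → ℝ) :
    IsConcept fun x => G fun i => halfspaceSign (w i) (t i) x :=
  fun x => hG _ fun i => by unfold halfspaceSign; split_ifs <;> simp

theorem comp_halfspaceSign_eq_of_dist_le (G : (ι → ℝ) → ℝ) {w : ι → EuclideanSpace ℝ (Fin d)}
    (hw : ∀ i, ‖w i‖ ≤ 1) {t : ι → ℝ} {ρ : ℝ} {x y : EuclideanSpace ℝ (Fin d)}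
    (hx : x ∉ ⋃ i, {z | |inner ℝ (w i) z - t i| ≤ ρ}) (hy : dist y x ≤ ρ) :
    (G fun i => halfspaceSign (w i) (t i) y) = G fun i => halfspaceSign (w i) (t i) x := by
  simp only [Set.mem_iUnion, Set.mem_ofPred_eq, not_exists, not_le] at hx
  exact congrArg G <| funext fun i => halfspaceSign_eq_of_dist_le (hw i) (hx i) hy

end Halfspace

theorem Anticoncentrated.measure_iUnion_slab_le {d : ℕ} {ι : Type*} [Fintype ι]
    {D : Measure (EuclideanSpace ℝ (Fin d))} {α : ℝ} (hD : Anticoncentrated D α)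
    {w : ι → EuclideanSpace ℝ (Fin d)} (hw : ∀ i, ‖w i‖ = 1) (t : ι → ℝ) {ρ : ℝ} (hρ : 0 ≤ ρ) :
    D (⋃ i, {x | |inner ℝ (w i) x - t i| ≤ ρ}) ≤ ENNReal.ofReal (Fintype.card ι * α * ρ) :=
  calc D (⋃ i, {x | |inner ℝ (w i) x - t i| ≤ ρ})
      ≤ ∑ i, D {x | |inner ℝ (w i) x - t i| ≤ ρ} := measure_iUnion_fintype_le D _
    _ ≤ ∑ _i : ι, ENNReal.ofReal (α * ρ) :=
        Finset.sum_le_sum fun i _ => hD (w i) (hw i) (t i) ρ hρ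
    _ = ENNReal.ofReal (Fintype.card ι * α * ρ) := by
        rw [Finset.sum_const, Finset.card_univ, nsmul_eq_mul, mul_assoc,
          ENNReal.ofReal_mul (Nat.cast_nonneg _), ENNReal.ofReal_natCast]

theorem statement_6_general {d k : ℕ} (D : Measure (EuclideanSpace ℝ (Fin d)))
    (α : ℝ) (hD : Anticoncentrated D α)
    (w : Fin k → EuclideanSpace ℝ (Fin d)) (hw : ∀ i, ‖w i‖ = 1) (t : Fin k → ℝ)
    (G : (Fin k → ℝ) → ℝ)
    (hG : ∀ v : Fin k → ℝ, (∀ i, v i = 1 ∨ v i = -1) → (G v = 1 ∨ G v = -1)) :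
    HasSmoothBoundary (fun x => G fun i => halfspaceSign (w i) (t i) x) D ((k : ℝ) * α) := by
  intro ρ hρ
  calc _ ≤ D (⋃ i, {x | |inner ℝ (w i) x - t i| ≤ ρ}) :=
        (isConcept_comp_halfspaceSign hG w t).lintegral_dilation_sub_erosion_le hρ D
          fun _ hx _ hy => comp_halfspaceSign_eq_of_dist_le G (fun i => (hw i).le) hx hy
    _ ≤ ENNReal.ofReal (k * α * ρ) := by
        simpa using hD.measure_iUnion_slab_le hw t hρ

theorem statement_6 {d k : ℕ} (D : Measure (EuclideanSpace ℝ (Fin d))) [IsProbabilityMeasure D]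
    (α : ℝ) (hD : Anticoncentrated D α)
    (w : Fin k → EuclideanSpace ℝ (Fin d)) (hw : ∀ i, ‖w i‖ = 1) (t : Fin k → ℝ)
    (G : (Fin k → ℝ) → ℝ)
    (hG : ∀ v : Fin k → ℝ, (∀ i, v i = 1 ∨ v i = -1) → (G v = 1 ∨ G v = -1)) :
    HasSmoothBoundary (fun x => G fun i => halfspaceSign (w i) (t i) x) D ((k : ℝ) * α) :=
  statement_6_general D α hD w hw t G hG
end
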